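/- For ρ ∈ (−π/2, π/2), let L₀ = i∂_t and L_± = e^{∓it}(±i cos ρ ∂_ρ + sin ρ ∂_t + cos ρ Σ⁰¹) act on smooth ℂ²-valued functions of (t, ρ), where Σ⁰¹ = (1/2)[[0, i],[−i, 0]]. Then [L₀, L₊] = L₊, [L₀, L₋] = −L₋, and [L₊, L₋] = 2L₀ as operators on smooth functions. -/

import Mathlib

open Real Set Complex

/-- Partial derivative in t of a ℂ²-valued function on ℝ × ℝ. -/
noncomputable def Dt (f : ℝ × ℝ → Fin 2 → ℂ) : ℝ × ℝ → Fin 2 → ℂ :=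
  fun p => fderiv ℝ f p (1, 0)

/-- Partial derivative in ρ of a ℂ²-valued function on ℝ × ℝ. -/
noncomputable def Dr (f : ℝ × ℝ → Fin 2 → ℂ) : ℝ × ℝ → Fin 2 → ℂ :=
  fun p => fderiv ℝ f p (0, 1)

/-- The constant matrix Σ⁰¹ = (1/2)[[0,i],[−i,0]] acting on spinor values. -/
noncomputable def Sig (v : Fin 2 → ℂ) : Fin 2 → ℂ :=
  ![(1/2 : ℂ) * Complex.I * v 1, -((1/2 : ℂ) * Complex.I * v 0)]

/-- L₀ = i ∂_t. -/
noncomputable def L0 (f : ℝ × ℝ → Fin 2 → ℂ) : ℝ × ℝ → Fin 2 → ℂ :=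
  fun p => Complex.I • Dt f p

/-- L₊ = e^{−it}(i cos ρ ∂_ρ + sin ρ ∂_t + cos ρ Σ⁰¹). -/
noncomputable def Lp (f : ℝ × ℝ → Fin 2 → ℂ) : ℝ × ℝ → Fin 2 → ℂ :=
  fun p => Complex.exp (-(Complex.I * p.1)) •
    (Complex.I • ((Real.cos p.2 : ℂ) • Dr f p)
      + (Real.sin p.2 : ℂ) • Dt f p + (Real.cos p.2 : ℂ) • Sig (f p))

/-- L₋ = e^{+it}(−i cos ρ ∂_ρ + sin ρ ∂_t + cos ρ Σ⁰¹). -/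
noncomputable def Lm (f : ℝ × ℝ → Fin 2 → ℂ) : ℝ × ℝ → Fin 2 → ℂ :=
  fun p => Complex.exp (Complex.I * p.1) •
    (-(Complex.I • ((Real.cos p.2 : ℂ) • Dr f p))
      + (Real.sin p.2 : ℂ) • Dt f p + (Real.cos p.2 : ℂ) • Sig (f p))

/-! ### Auxiliary machinery -/

/-- `Sig` as a continuous linear map. -/
noncomputable def sigL : (Fin 2 → ℂ) →L[ℂ] (Fin 2 → ℂ) :=
  LinearMap.toContinuousLinearMap
  { toFun := Sig
    map_add' := by intro x y; funext i; fin_cases i <;> simp [Sig] <;> ring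
    map_smul' := by intro c x; funext i; fin_cases i <;> simp [Sig] <;> ring }

lemma sigL_apply (v : Fin 2 → ℂ) : sigL v = Sig v := rfl

lemma Sig_sig (v : Fin 2 → ℂ) : Sig (Sig v) = (1/4 : ℂ) • v := by
  funext i; fin_cases i <;> simp [Sig] <;> ring_nf <;> simp [Complex.I_sq] <;> ring

lemma Sig_smul (c : ℂ) (v : Fin 2 → ℂ) : Sig (c • v) = c • Sig v := by
  rw [← sigL_apply, ← sigL_apply, map_smul]

lemma Sig_add (v w : Fin 2 → ℂ) : Sig (v + w) = Sig v + Sig w := by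
  rw [← sigL_apply, ← sigL_apply, ← sigL_apply, map_add]

lemma Sig_comb (x y z : ℂ) (u v w : Fin 2 → ℂ) :
    Sig (x • u + y • v + z • w) = x • Sig u + y • Sig v + z • Sig w := by
  rw [Sig_add, Sig_add, Sig_smul, Sig_smul, Sig_smul]

/-- Coefficient functions. -/
noncomputable def aP : ℝ × ℝ → ℂ := fun q => Complex.exp (-(Complex.I * q.1)) * (Complex.I * Real.cos q.2)
noncomputable def bP : ℝ × ℝ → ℂ := fun q => Complex.exp (-(Complex.I * q.1)) * Real.sin q.2
noncomputable def cP : ℝ × ℝ → ℂ := fun q => Complex.exp (-(Complex.I * q.1)) * Real.cos q.2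
noncomputable def aM : ℝ × ℝ → ℂ := fun q => Complex.exp (Complex.I * q.1) * (-(Complex.I * Real.cos q.2))
noncomputable def bM : ℝ × ℝ → ℂ := fun q => Complex.exp (Complex.I * q.1) * Real.sin q.2
noncomputable def cM : ℝ × ℝ → ℂ := fun q => Complex.exp (Complex.I * q.1) * Real.cos q.2

noncomputable def D1 : ℝ × ℝ →L[ℝ] ℂ := Complex.ofRealCLM.comp (ContinuousLinearMap.fst ℝ ℝ ℝ)

section coeff
variable (p : ℝ × ℝ)

lemma hT : HasFDerivAt (fun q : ℝ × ℝ => (q.1 : ℂ)) D1 p := D1.hasFDerivAt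

lemma hEm : HasFDerivAt (fun q : ℝ × ℝ => Complex.exp (-(Complex.I * q.1)))
    (Complex.exp (-(Complex.I * p.1)) • -(Complex.I • D1)) p :=
  (((hT p).const_mul Complex.I).neg).cexp

lemma hEp : HasFDerivAt (fun q : ℝ × ℝ => Complex.exp (Complex.I * q.1))
    (Complex.exp (Complex.I * p.1) • (Complex.I • D1)) p :=
  ((hT p).const_mul Complex.I).cexp

lemma hC : HasFDerivAt (fun q : ℝ × ℝ => ((Real.cos q.2 : ℝ) : ℂ))
    (Complex.ofRealCLM.comp ((-Real.sin p.2) • (ContinuousLinearMap.snd ℝ ℝ ℝ))) p :=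
  Complex.ofRealCLM.hasFDerivAt.comp p ((hasFDerivAt_snd).cos)

lemma hS : HasFDerivAt (fun q : ℝ × ℝ => ((Real.sin q.2 : ℝ) : ℂ))
    (Complex.ofRealCLM.comp ((Real.cos p.2) • (ContinuousLinearMap.snd ℝ ℝ ℝ))) p :=
  Complex.ofRealCLM.hasFDerivAt.comp p ((hasFDerivAt_snd).sin)

lemma haP : HasFDerivAt aP
    ((Complex.exp (-(Complex.I * p.1))) • (Complex.I • (Complex.ofRealCLM.comp ((-Real.sin p.2) • (ContinuousLinearMap.snd ℝ ℝ ℝ))))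
      + (Complex.I * Real.cos p.2) • (Complex.exp (-(Complex.I * p.1)) • -(Complex.I • D1))) p :=
  (hEm p).mul ((hC p).const_mul Complex.I)

lemma hbP : HasFDerivAt bP
    ((Complex.exp (-(Complex.I * p.1))) • (Complex.ofRealCLM.comp ((Real.cos p.2) • (ContinuousLinearMap.snd ℝ ℝ ℝ)))
      + ((Real.sin p.2 : ℂ)) • (Complex.exp (-(Complex.I * p.1)) • -(Complex.I • D1))) p :=
  (hEm p).mul (hS p)

lemma hcP : HasFDerivAt cP
    ((Complex.exp (-(Complex.I * p.1))) • (Complex.ofRealCLM.comp ((-Real.sin p.2) • (ContinuousLinearMap.snd ℝ ℝ ℝ)))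
      + ((Real.cos p.2 : ℂ)) • (Complex.exp (-(Complex.I * p.1)) • -(Complex.I • D1))) p :=
  (hEm p).mul (hC p)

lemma haM : HasFDerivAt aM
    ((Complex.exp (Complex.I * p.1)) • -(Complex.I • (Complex.ofRealCLM.comp ((-Real.sin p.2) • (ContinuousLinearMap.snd ℝ ℝ ℝ))))
      + (-(Complex.I * Real.cos p.2)) • (Complex.exp (Complex.I * p.1) • (Complex.I • D1))) p :=
  (hEp p).mul (((hC p).const_mul Complex.I).neg)

lemma hbM : HasFDerivAt bM
    ((Complex.exp (Complex.I * p.1)) • (Complex.ofRealCLM.comp ((Real.cos p.2) • (ContinuousLinearMap.snd ℝ ℝ ℝ)))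
      + ((Real.sin p.2 : ℂ)) • (Complex.exp (Complex.I * p.1) • (Complex.I • D1))) p :=
  (hEp p).mul (hS p)

lemma hcM : HasFDerivAt cM
    ((Complex.exp (Complex.I * p.1)) • (Complex.ofRealCLM.comp ((-Real.sin p.2) • (ContinuousLinearMap.snd ℝ ℝ ℝ)))
      + ((Real.cos p.2 : ℂ)) • (Complex.exp (Complex.I * p.1) • (Complex.I • D1))) p :=
  (hEp p).mul (hC p)

lemma dt_aP : fderiv ℝ aP p (1,0) = -Complex.I * aP p := by
  rw [(haP p).fderiv]; simp [D1, aP]; try ring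
lemma dr_aP : fderiv ℝ aP p (0,1) = Complex.exp (-(Complex.I * p.1)) * (Complex.I * (-Real.sin p.2)) := by
  rw [(haP p).fderiv]; simp [D1]; try ring
lemma dt_bP : fderiv ℝ bP p (1,0) = -Complex.I * bP p := by
  rw [(hbP p).fderiv]; simp [D1, bP]; try ring
lemma dr_bP : fderiv ℝ bP p (0,1) = Complex.exp (-(Complex.I * p.1)) * Real.cos p.2 := by
  rw [(hbP p).fderiv]; simp [D1]; try ring
lemma dt_cP : fderiv ℝ cP p (1,0) = -Complex.I * cP p := by
  rw [(hcP p).fderiv]; simp [D1, cP]; try ring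
lemma dr_cP : fderiv ℝ cP p (0,1) = Complex.exp (-(Complex.I * p.1)) * (-Real.sin p.2) := by
  rw [(hcP p).fderiv]; simp [D1]; try ring
lemma dt_aM : fderiv ℝ aM p (1,0) = Complex.I * aM p := by
  rw [(haM p).fderiv]; simp [D1, aM]; try ring
lemma dr_aM : fderiv ℝ aM p (0,1) = Complex.exp (Complex.I * p.1) * (Complex.I * Real.sin p.2) := by
  rw [(haM p).fderiv]; simp [D1]; try ring
lemma dt_bM : fderiv ℝ bM p (1,0) = Complex.I * bM p := by
  rw [(hbM p).fderiv]; simp [D1, bM]; try ring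
lemma dr_bM : fderiv ℝ bM p (0,1) = Complex.exp (Complex.I * p.1) * Real.cos p.2 := by
  rw [(hbM p).fderiv]; simp [D1]; try ring
lemma dt_cM : fderiv ℝ cM p (1,0) = Complex.I * cM p := by
  rw [(hcM p).fderiv]; simp [D1, cM]; try ring
lemma dr_cM : fderiv ℝ cM p (0,1) = Complex.exp (Complex.I * p.1) * (-Real.sin p.2) := by
  rw [(hcM p).fderiv]; simp [D1]; try ring
end coeff

noncomputable def Phi (a b c : ℝ × ℝ → ℂ) (g : ℝ × ℝ → Fin 2 → ℂ) : ℝ × ℝ → Fin 2 → ℂ :=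
  fun q => a q • Dr g q + b q • Dt g q + c q • Sig (g q)

lemma Lp_eq (f : ℝ × ℝ → Fin 2 → ℂ) : Lp f = Phi aP bP cP f := by
  funext q
  simp only [Lp, Phi, aP, bP, cP, smul_add, smul_smul]

lemma Lm_eq (f : ℝ × ℝ → Fin 2 → ℂ) : Lm f = Phi aM bM cM f := by
  funext q
  simp only [Lm, Phi, aM, bM, cM, smul_add, smul_smul, smul_neg, neg_smul, neg_mul, mul_neg]

variable {f g : ℝ × ℝ → Fin 2 → ℂ}

lemma contDiff_Dt (hf : ContDiff ℝ (⊤ : ℕ∞) f) : ContDiff ℝ (⊤ : ℕ∞) (Dt f) :=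
  (hf.fderiv_right (by simp)).clm_apply contDiff_const
lemma contDiff_Dr (hf : ContDiff ℝ (⊤ : ℕ∞) f) : ContDiff ℝ (⊤ : ℕ∞) (Dr f) :=
  (hf.fderiv_right (by simp)).clm_apply contDiff_const

lemma mixed (hf : ContDiff ℝ (⊤ : ℕ∞) f) (p : ℝ × ℝ) : Dt (Dr f) p = Dr (Dt f) p := by
  have hd : Differentiable ℝ f := hf.differentiable (by simp)
  have hd2 : DifferentiableAt ℝ (fderiv ℝ f) p :=
    ((hf.fderiv_right (m := (⊤ : ℕ∞)) (by simp)).differentiable (by simp)).differentiableAt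
  have hsym := second_derivative_symmetric (f' := fderiv ℝ f)
    (fun y => (hd y).hasFDerivAt) hd2.hasFDerivAt
  have h1 : ∀ u v : ℝ × ℝ, fderiv ℝ (fun q => fderiv ℝ f q u) p v
      = fderiv ℝ (fderiv ℝ f) p v u := by
    intro u v
    rw [fderiv_clm_apply hd2 (differentiableAt_const u)]
    simp
  show fderiv ℝ (fun q => fderiv ℝ f q (0,1)) p (1,0) = fderiv ℝ (fun q => fderiv ℝ f q (1,0)) p (0,1)
  rw [h1, h1, hsym]

lemma fderiv_Phi {a b c : ℝ × ℝ → ℂ} {p : ℝ × ℝ}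
    (ha : DifferentiableAt ℝ a p) (hb : DifferentiableAt ℝ b p) (hc : DifferentiableAt ℝ c p)
    (hg : ContDiff ℝ (⊤ : ℕ∞) g) (v : ℝ × ℝ) :
    fderiv ℝ (Phi a b c g) p v
      = fderiv ℝ a p v • Dr g p + a p • fderiv ℝ (Dr g) p v
        + fderiv ℝ b p v • Dt g p + b p • fderiv ℝ (Dt g) p v
        + fderiv ℝ c p v • Sig (g p) + c p • Sig (fderiv ℝ g p v) := by
  have hDr : DifferentiableAt ℝ (Dr g) p := ((contDiff_Dr hg).differentiable (by simp)) p
  have hDt : DifferentiableAt ℝ (Dt g) p := ((contDiff_Dt hg).differentiable (by simp)) p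
  have hSig : HasFDerivAt (fun q => Sig (g q)) ((sigL.restrictScalars ℝ).comp (fderiv ℝ g p)) p :=
    ((sigL.restrictScalars ℝ).hasFDerivAt).comp p ((hg.differentiable (by simp)) p).hasFDerivAt
  have h1 : fderiv ℝ (Phi a b c g) p
      = (a p • fderiv ℝ (Dr g) p + (fderiv ℝ a p).smulRight (Dr g p))
        + (b p • fderiv ℝ (Dt g) p + (fderiv ℝ b p).smulRight (Dt g p))
        + (c p • ((sigL.restrictScalars ℝ).comp (fderiv ℝ g p)) + (fderiv ℝ c p).smulRight (Sig (g p))) := by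
    unfold Phi
    rw [fderiv_fun_add ((ha.fun_smul hDr).fun_add (hb.fun_smul hDt)) (hc.fun_smul hSig.differentiableAt),
      fderiv_fun_add (ha.fun_smul hDr) (hb.fun_smul hDt), fderiv_fun_smul ha hDr, fderiv_fun_smul hb hDt]
    congr 1
    rw [fderiv_fun_smul hc hSig.differentiableAt, hSig.fderiv]
  rw [h1]
  simp only [ContinuousLinearMap.add_apply, ContinuousLinearMap.smul_apply,
    ContinuousLinearMap.smulRight_apply, ContinuousLinearMap.coe_comp', Function.comp_apply,
    ContinuousLinearMap.coe_restrictScalars', sigL_apply]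
  abel

/-- On smooth ℂ²-valued functions of (t, ρ) with ρ ∈ (−π/2, π/2), the operators
L₀ = i∂_t and L_± satisfy [L₀, L₊] = L₊, [L₀, L₋] = −L₋, [L₊, L₋] = 2L₀. -/
theorem stmt19 (f : ℝ × ℝ → Fin 2 → ℂ) (hf : ContDiff ℝ (⊤ : ℕ∞) f) :
    ∀ p : ℝ × ℝ, p.2 ∈ Ioo (-(π/2)) (π/2) →
      (L0 (Lp f) p - Lp (L0 f) p = Lp f p) ∧
      (L0 (Lm f) p - Lm (L0 f) p = -(Lm f p)) ∧
      (Lp (Lm f) p - Lm (Lp f) p = (2 : ℂ) • L0 f p) := by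
  intro p _
  have hDt : DifferentiableAt ℝ (Dt f) p := ((contDiff_Dt hf).differentiable (by simp)) p
  have hE : Complex.exp (-(Complex.I * p.1)) * Complex.exp (Complex.I * p.1) = 1 := by
    rw [← Complex.exp_add]; simp
  have hsc : Complex.sin (p.2 : ℂ)^2 + Complex.cos (p.2 : ℂ)^2 = 1 :=
    Complex.sin_sq_add_cos_sq _
  have hI := Complex.I_mul_I
  -- pointwise forms of Lp, Lm applied to any g
  have LpPt : ∀ g : ℝ × ℝ → Fin 2 → ℂ, Lp g p = aP p • Dr g p + bP p • Dt g p + cP p • Sig (g p) :=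
    fun g => congrFun (Lp_eq g) p
  have LmPt : ∀ g : ℝ × ℝ → Fin 2 → ℂ, Lm g p = aM p • Dr g p + bM p • Dt g p + cM p • Sig (g p) :=
    fun g => congrFun (Lm_eq g) p
  -- derivatives of L0 f
  have eL0t : Dt (L0 f) p = Complex.I • Dt (Dt f) p := by
    show fderiv ℝ (fun q => Complex.I • Dt f q) p (1,0) = _
    rw [fderiv_fun_const_smul hDt]; rfl
  have eL0r : Dr (L0 f) p = Complex.I • Dr (Dt f) p := by
    show fderiv ℝ (fun q => Complex.I • Dt f q) p (0,1) = _
    rw [fderiv_fun_const_smul hDt]; rfl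
  have SigL0 : Sig (L0 f p) = Complex.I • Sig (Dt f p) := Sig_smul _ _
  -- derivatives of Lp f, Lm f
  have eLpt : Dt (Lp f) p = (-Complex.I * aP p) • Dr f p + aP p • Dt (Dr f) p
      + (-Complex.I * bP p) • Dt f p + bP p • Dt (Dt f) p
      + (-Complex.I * cP p) • Sig (f p) + cP p • Sig (Dt f p) := by
    show fderiv ℝ (Lp f) p (1,0) = _
    rw [Lp_eq f, fderiv_Phi (haP p).differentiableAt (hbP p).differentiableAt
      (hcP p).differentiableAt hf (1,0), dt_aP, dt_bP, dt_cP]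
    rfl
  have eLpr : Dr (Lp f) p = (Complex.exp (-(Complex.I * p.1)) * (Complex.I * (-Real.sin p.2))) • Dr f p + aP p • Dr (Dr f) p
      + (Complex.exp (-(Complex.I * p.1)) * Real.cos p.2) • Dt f p + bP p • Dr (Dt f) p
      + (Complex.exp (-(Complex.I * p.1)) * (-Real.sin p.2)) • Sig (f p) + cP p • Sig (Dr f p) := by
    show fderiv ℝ (Lp f) p (0,1) = _
    rw [Lp_eq f, fderiv_Phi (haP p).differentiableAt (hbP p).differentiableAt
      (hcP p).differentiableAt hf (0,1), dr_aP, dr_bP, dr_cP]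
    rfl
  have eLmt : Dt (Lm f) p = (Complex.I * aM p) • Dr f p + aM p • Dt (Dr f) p
      + (Complex.I * bM p) • Dt f p + bM p • Dt (Dt f) p
      + (Complex.I * cM p) • Sig (f p) + cM p • Sig (Dt f p) := by
    show fderiv ℝ (Lm f) p (1,0) = _
    rw [Lm_eq f, fderiv_Phi (haM p).differentiableAt (hbM p).differentiableAt
      (hcM p).differentiableAt hf (1,0), dt_aM, dt_bM, dt_cM]
    rfl
  have eLmr : Dr (Lm f) p = (Complex.exp (Complex.I * p.1) * (Complex.I * Real.sin p.2)) • Dr f p + aM p • Dr (Dr f) p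
      + (Complex.exp (Complex.I * p.1) * Real.cos p.2) • Dt f p + bM p • Dr (Dt f) p
      + (Complex.exp (Complex.I * p.1) * (-Real.sin p.2)) • Sig (f p) + cM p • Sig (Dr f p) := by
    show fderiv ℝ (Lm f) p (0,1) = _
    rw [Lm_eq f, fderiv_Phi (haM p).differentiableAt (hbM p).differentiableAt
      (hcM p).differentiableAt hf (0,1), dr_aM, dr_bM, dr_cM]
    rfl
  have SigLp : Sig (Lp f p) = aP p • Sig (Dr f p) + bP p • Sig (Dt f p) + cP p • ((1/4 : ℂ) • f p) := by
    rw [LpPt f, Sig_comb, Sig_sig]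
  have SigLm : Sig (Lm f p) = aM p • Sig (Dr f p) + bM p • Sig (Dt f p) + cM p • ((1/4 : ℂ) • f p) := by
    rw [LmPt f, Sig_comb, Sig_sig]
  have hmx : Dt (Dr f) p = Dr (Dt f) p := mixed hf p
  refine ⟨?_, ?_, ?_⟩
  · show Complex.I • Dt (Lp f) p - Lp (L0 f) p = Lp f p
    rw [LpPt (L0 f), LpPt f, eLpt, eL0t, eL0r, SigL0, hmx]
    match_scalars <;> simp only [aP, bP, cP] <;> ring_nf <;>
      simp [Complex.I_sq] <;> ring_nf
  · show Complex.I • Dt (Lm f) p - Lm (L0 f) p = -(Lm f p)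
    rw [LmPt (L0 f), LmPt f, eLmt, eL0t, eL0r, SigL0, hmx]
    match_scalars <;> simp only [aM, bM, cM] <;> ring_nf <;>
      simp [Complex.I_sq] <;> ring_nf
  · show Lp (Lm f) p - Lm (Lp f) p = (2 : ℂ) • (Complex.I • Dt f p)
    rw [LpPt (Lm f), LmPt (Lp f), eLpt, eLpr, eLmt, eLmr, SigLp, SigLm, hmx]
    match_scalars <;> simp only [aP, bP, cP, aM, bM, cM] <;> ring_nf <;>
      simp [Complex.I_sq] <;> ring_nf
    linear_combination (norm := ring_nf)
      (2 * Complex.I * (Complex.sin (p.2:ℂ)^2 + Complex.cos (p.2:ℂ)^2)) * hE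
        + (2 * Complex.I) * hsc
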